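/- For every i ≥ 0, the coefficient of z in the polynomial s^-_i equals Σ_{c ⊨ i+1} (−1)^{|c|+i+1}·(3/2)^{Θ̃(c)}·{c}. -/

import Mathlib

open MvPolynomial

/-- We work in `ℚ[x_1,x_2,…][y,z]`: polynomials in the two variables `y` (encoded `false`)
and `z` (encoded `true`) over the ring `ℚ[x_1,x_2,…]`.  `sPair j = (s^-_j, s^+_j)` where
`s^-_0 = z`, `s^+_0 = 2y`, and for `j ≥ 1`,
`s^-_j = (x_j − 1)·s^-_{j−1} + (1/2)·x_j·s^+_{j−1}`,
`s^+_j = x_j·s^-_{j−1} + (1/2)·x_j·s^+_{j−1}`. -/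
noncomputable def sPair : ℕ →
    MvPolynomial Bool (MvPolynomial ℕ ℚ) × MvPolynomial Bool (MvPolynomial ℕ ℚ)
  | 0 => (X true, 2 * X false)
  | j + 1 =>
    ((C (X (j + 1) : MvPolynomial ℕ ℚ) - 1) * (sPair j).1 +
        C ((MvPolynomial.C (1 / 2 : ℚ) * X (j + 1) : MvPolynomial ℕ ℚ)) * (sPair j).2,
      C (X (j + 1) : MvPolynomial ℕ ℚ) * (sPair j).1 +
        C ((MvPolynomial.C (1 / 2 : ℚ) * X (j + 1) : MvPolynomial ℕ ℚ)) * (sPair j).2)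

/-- `s^-_j`. -/
noncomputable def smP (j : ℕ) : MvPolynomial Bool (MvPolynomial ℕ ℚ) := (sPair j).1

/-- The monomial `{c} = x_{c_1}·x_{c_1+c_2}···x_{c_1+⋯+c_{ℓ−1}}` attached to a composition
with list of parts `l` (the empty product `1` when `ℓ = 1`). -/
noncomputable def curly (l : List ℕ) : MvPolynomial ℕ ℚ :=
  ∏ k ∈ Finset.range (l.length - 1), X ((l.take (k + 1)).sum)

/-- `Θ̃(c) = #{ i : 2 ≤ i ≤ ℓ−1, c_i = 1 }`. -/
def thetaTilde (l : List ℕ) : ℕ :=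
  (((l.drop 1).take (l.length - 2)).filter (· == 1)).length

/-!
Let `T_n` and `U_n` be the signed sums `Σ_{c ⊨ n} (−1)^{|c|+n} (3/2)^{θ(c)} {c}` with `θ = Θ̃`
and `θ = Θ` respectively, where `Θ` also counts a last part equal to `1`. A composition of `n + 2`
either ends in a part `1`, which can be removed, or its last part can be decreased by one; this
splits it into two compositions of `n + 1` and yields
`T_{n+2} = −T_{n+1} + x_{n+1} U_{n+1}` and `U_{n+2} = −T_{n+1} + (3/2) x_{n+1} U_{n+1}`.
The `z`-coefficients `a_j`, `b_j` of `s^-_j`, `s^+_j` satisfy the same recursion in the form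
`a_j = T_{j+1}`, `a_j + b_j / 2 = U_{j+1}`.
-/

open Finset

namespace List

theorem modifyLast_injective {α : Type*} {f : α → α} (hf : Function.Injective f) :
    Function.Injective (modifyLast f) := by
  intro l l' h
  rcases l.eq_nil_or_concat' with rfl | ⟨m, a, rfl⟩ <;>
    rcases l'.eq_nil_or_concat' with rfl | ⟨m', a', rfl⟩
  · rfl
  · rw [modifyLast_concat] at h
    exact absurd h.symm (append_ne_nil_of_right_ne_nil _ (cons_ne_nil _ _))
  · rw [modifyLast_concat] at h
    exact absurd h (append_ne_nil_of_right_ne_nil _ (cons_ne_nil _ _))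
  · rw [modifyLast_concat, modifyLast_concat] at h
    obtain ⟨rfl, hlast⟩ := append_inj' h rfl
    rw [hf (singleton_injective hlast)]

theorem length_modifyLast {α : Type*} (f : α → α) (l : List α) :
    (l.modifyLast f).length = l.length := by
  rcases l.eq_nil_or_concat' with rfl | ⟨m, a, rfl⟩
  · rfl
  · simp [modifyLast_concat]

theorem sum_modifyLast_succ {l : List ℕ} (hl : l ≠ []) :
    (l.modifyLast (· + 1)).sum = l.sum + 1 := by
  obtain ⟨m, a, rfl⟩ := (eq_nil_or_concat' l).resolve_left hl
  simp [modifyLast_concat, add_assoc]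

end List

theorem curly_append_singleton (l : List ℕ) (a : ℕ) :
    curly (l ++ [a]) = ∏ k ∈ range l.length, X (l.take (k + 1)).sum := by
  rw [curly, List.length_append, List.length_singleton, Nat.add_sub_cancel]
  refine prod_congr rfl fun k hk => ?_
  rw [List.take_append_of_le_length (mem_range.1 hk)]

theorem curly_append_singleton_of_ne_nil {l : List ℕ} (hl : l ≠ []) (a : ℕ) :
    curly (l ++ [a]) = curly l * X l.sum := by
  obtain ⟨m, b, rfl⟩ := l.eq_nil_or_concat'.resolve_left hl
  rw [curly_append_singleton, List.length_append, List.length_singleton, prod_range_succ,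
    curly_append_singleton, List.take_length_add_append]
  congr 1
  refine prod_congr rfl fun k hk => ?_
  rw [List.take_append_of_le_length (mem_range.1 hk)]

theorem curly_modifyLast (f : ℕ → ℕ) (l : List ℕ) : curly (l.modifyLast f) = curly l := by
  rcases l.eq_nil_or_concat' with rfl | ⟨m, a, rfl⟩
  · rfl
  · rw [List.modifyLast_concat, curly_append_singleton, curly_append_singleton]

/-- `Θ(c) = #{ i : 2 ≤ i ≤ ℓ, c_i = 1 }`: unlike `Θ̃`, it also counts a last part equal to `1`. -/
def theta (l : List ℕ) : ℕ := (l.tail.filter (· == 1)).length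

theorem thetaTilde_append_singleton (l : List ℕ) (a : ℕ) : thetaTilde (l ++ [a]) = theta l := by
  rcases l with _ | ⟨x, m⟩
  · rfl
  · simp [thetaTilde, theta]

theorem thetaTilde_modifyLast (f : ℕ → ℕ) (l : List ℕ) :
    thetaTilde (l.modifyLast f) = thetaTilde l := by
  rcases l.eq_nil_or_concat' with rfl | ⟨m, a, rfl⟩
  · rfl
  · rw [List.modifyLast_concat, thetaTilde_append_singleton, thetaTilde_append_singleton]

theorem theta_append_one {l : List ℕ} (hl : l ≠ []) : theta (l ++ [1]) = theta l + 1 := by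
  simp [theta, hl]

theorem theta_append_singleton_of_ne_one (l : List ℕ) {a : ℕ} (ha : a ≠ 1) :
    theta (l ++ [a]) = theta l := by
  rcases l with _ | ⟨x, m⟩ <;> simp [theta, ha]

theorem theta_modifyLast_succ {l : List ℕ} (hl : 0 ∉ l) :
    theta (l.modifyLast (· + 1)) = thetaTilde l := by
  rcases l.eq_nil_or_concat' with rfl | ⟨m, a, rfl⟩
  · rfl
  · have ha : a + 1 ≠ 1 := fun h => hl (by simp [Nat.succ_injective h])
    rw [List.modifyLast_concat, theta_append_singleton_of_ne_one _ ha, thetaTilde_append_singleton]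

namespace Composition

variable {n : ℕ}

theorem blocks_ne_nil (c : Composition (n + 1)) : c.blocks ≠ [] :=
  List.ne_nil_of_length_pos (c.length_pos_of_pos n.succ_pos)

def appendOne (c : Composition n) : Composition (n + 1) where
  blocks := c.blocks ++ [1]
  blocks_pos hi := by
    rcases List.mem_append.1 hi with hi | hi
    · exact c.blocks_pos hi
    · simp_all
  blocks_sum := by simp [c.blocks_sum]

def succLast (c : Composition (n + 1)) : Composition (n + 2) where
  blocks := c.blocks.modifyLast (· + 1)
  blocks_pos hi := by
    obtain ⟨m, a, hc⟩ := c.blocks.eq_nil_or_concat'.resolve_left c.blocks_ne_nil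
    rw [hc, List.modifyLast_concat, List.mem_append] at hi
    rcases hi with hi | hi
    · exact c.blocks_pos (hc ▸ List.mem_append_left _ hi)
    · simp_all
  blocks_sum := by rw [List.sum_modifyLast_succ c.blocks_ne_nil, c.blocks_sum]

theorem appendOne_injective : Function.Injective (appendOne (n := n)) :=
  fun _ _ h => Composition.ext (List.append_cancel_right (congrArg blocks h))

theorem succLast_injective : Function.Injective (succLast (n := n)) :=
  fun _ _ h => Composition.ext (List.modifyLast_injective Nat.succ_injective (congrArg blocks h))

theorem appendOne_ne_succLast (c d : Composition (n + 1)) : c.appendOne ≠ d.succLast := by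
  intro h
  obtain ⟨m, a, hd⟩ := d.blocks.eq_nil_or_concat'.resolve_left d.blocks_ne_nil
  have hb : c.blocks ++ [1] = m ++ [a + 1] := by
    rw [← List.modifyLast_concat (· + 1), ← hd]
    exact congrArg blocks h
  have ha : 0 < a := d.blocks_pos (by simp [hd])
  have := List.singleton_injective (List.append_inj' hb rfl).2
  omega

theorem sum_eq_sum_appendOne_add_sum_succLast {M : Type*} [AddCommMonoid M]
    (f : Composition (n + 2) → M) :
    ∑ c, f c =
      ∑ c : Composition (n + 1), f c.appendOne + ∑ c : Composition (n + 1), f c.succLast := by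
  have hbij : Function.Bijective (Sum.elim (appendOne (n := n + 1)) (succLast (n := n))) := by
    refine (Fintype.bijective_iff_injective_and_card _).2 ⟨?_, ?_⟩
    · exact appendOne_injective.sumElim succLast_injective appendOne_ne_succLast
    · simp [composition_card, pow_succ, mul_two]
  rw [← Fintype.sum_bijective _ hbij (fun x => f (Sum.elim appendOne succLast x)) f
    fun _ => rfl, Fintype.sum_sum_type]
  rfl

end Composition

noncomputable def compositionTerm (θ : List ℕ → ℕ) (n : ℕ) (l : List ℕ) : MvPolynomial ℕ ℚ :=
  C ((-1 : ℚ) ^ (l.length + n) * (3 / 2 : ℚ) ^ θ l) * curly l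

noncomputable def compositionSum (θ : List ℕ → ℕ) (n : ℕ) : MvPolynomial ℕ ℚ :=
  ∑ c : Composition n, compositionTerm θ n c.blocks

section compositionTerm

variable {n : ℕ} {l : List ℕ}

theorem compositionTerm_thetaTilde_append_one (hl : l ≠ []) (hs : l.sum = n) :
    compositionTerm thetaTilde (n + 1) (l ++ [1]) = X n * compositionTerm theta n l := by
  rw [compositionTerm, compositionTerm, thetaTilde_append_singleton,
    curly_append_singleton_of_ne_nil hl, hs, List.length_append, List.length_singleton]
  simp only [map_mul, map_pow, map_neg, map_one]
  ring

theorem compositionTerm_theta_append_one (hl : l ≠ []) (hs : l.sum = n) :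
    compositionTerm theta (n + 1) (l ++ [1]) = C (3 / 2) * X n * compositionTerm theta n l := by
  rw [compositionTerm, compositionTerm, theta_append_one hl, curly_append_singleton_of_ne_nil hl,
    hs, List.length_append, List.length_singleton]
  simp only [map_mul, map_pow, map_neg, map_one]
  ring

theorem compositionTerm_thetaTilde_modifyLast_succ (l : List ℕ) :
    compositionTerm thetaTilde (n + 1) (l.modifyLast (· + 1)) =
      -compositionTerm thetaTilde n l := by
  rw [compositionTerm, compositionTerm, thetaTilde_modifyLast, curly_modifyLast,
    List.length_modifyLast]
  simp only [map_mul, map_pow, map_neg, map_one]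
  ring

theorem compositionTerm_theta_modifyLast_succ (hl : 0 ∉ l) :
    compositionTerm theta (n + 1) (l.modifyLast (· + 1)) = -compositionTerm thetaTilde n l := by
  rw [compositionTerm, compositionTerm, theta_modifyLast_succ hl, curly_modifyLast,
    List.length_modifyLast]
  simp only [map_mul, map_pow, map_neg, map_one]
  ring

end compositionTerm

theorem compositionSum_thetaTilde_succ_succ (n : ℕ) :
    compositionSum thetaTilde (n + 2) =
      -compositionSum thetaTilde (n + 1) + X (n + 1) * compositionSum theta (n + 1) := by
  have happend (c : Composition (n + 1)) :
      compositionTerm thetaTilde (n + 2) c.appendOne.blocks =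
        X (n + 1) * compositionTerm theta (n + 1) c.blocks :=
    compositionTerm_thetaTilde_append_one c.blocks_ne_nil c.blocks_sum
  have hsucc (c : Composition (n + 1)) :
      compositionTerm thetaTilde (n + 2) c.succLast.blocks =
        -compositionTerm thetaTilde (n + 1) c.blocks :=
    compositionTerm_thetaTilde_modifyLast_succ c.blocks
  rw [compositionSum, Composition.sum_eq_sum_appendOne_add_sum_succLast]
  simp only [happend, hsucc, ← mul_sum, sum_neg_distrib]
  rw [compositionSum, compositionSum, add_comm]

theorem compositionSum_theta_succ_succ (n : ℕ) :
    compositionSum theta (n + 2) =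
      -compositionSum thetaTilde (n + 1) +
        C (3 / 2) * X (n + 1) * compositionSum theta (n + 1) := by
  have happend (c : Composition (n + 1)) :
      compositionTerm theta (n + 2) c.appendOne.blocks =
        C (3 / 2) * X (n + 1) * compositionTerm theta (n + 1) c.blocks :=
    compositionTerm_theta_append_one c.blocks_ne_nil c.blocks_sum
  have hsucc (c : Composition (n + 1)) :
      compositionTerm theta (n + 2) c.succLast.blocks =
        -compositionTerm thetaTilde (n + 1) c.blocks :=
    compositionTerm_theta_modifyLast_succ fun h => (c.blocks_pos h).false
  rw [compositionSum, Composition.sum_eq_sum_appendOne_add_sum_succLast]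
  simp only [happend, hsucc, ← mul_sum, sum_neg_distrib]
  rw [compositionSum, compositionSum, add_comm]

theorem compositionSum_one {θ : List ℕ → ℕ} (hθ : θ [1] = 0) : compositionSum θ 1 = 1 := by
  have : Subsingleton (Composition 1) :=
    Fintype.card_le_one_iff_subsingleton.1 (by simp [composition_card])
  rw [compositionSum, Fintype.sum_subsingleton _ (Composition.single 1 one_pos),
    Composition.single_blocks]
  simp [compositionTerm, hθ, curly]

section sPair

variable (m : Bool →₀ ℕ) (j : ℕ)

theorem coeff_sPair_succ_fst :
    coeff m (sPair (j + 1)).1 =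
      (X (j + 1) - 1) * coeff m (sPair j).1 + C (1 / 2) * X (j + 1) * coeff m (sPair j).2 := by
  rw [sPair, coeff_add, sub_mul, coeff_sub, one_mul, coeff_C_mul, coeff_C_mul, sub_mul, one_mul]

theorem coeff_sPair_succ_snd :
    coeff m (sPair (j + 1)).2 =
      X (j + 1) * coeff m (sPair j).1 + C (1 / 2) * X (j + 1) * coeff m (sPair j).2 := by
  rw [sPair, coeff_add, coeff_C_mul, coeff_C_mul]

end sPair

theorem coeff_z_sPair (j : ℕ) :
    coeff (Finsupp.single true 1) (sPair j).1 = compositionSum thetaTilde (j + 1) ∧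
      coeff (Finsupp.single true 1) (sPair j).1 +
          C (1 / 2) * coeff (Finsupp.single true 1) (sPair j).2 =
        compositionSum theta (j + 1) := by
  induction j with
  | zero =>
    rw [compositionSum_one rfl, compositionSum_one rfl]
    simp [sPair, coeff_X, two_mul, Finsupp.single_eq_single_iff]
  | succ j ih =>
    obtain ⟨hT, hU⟩ := ih
    have hthree : (C (3 / 2 : ℚ) : MvPolynomial ℕ ℚ) = 1 + C (1 / 2) := by
      rw [← map_one C, ← map_add]
      norm_num
    rw [coeff_sPair_succ_fst, coeff_sPair_succ_snd, compositionSum_thetaTilde_succ_succ,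
      compositionSum_theta_succ_succ, ← hT, ← hU, hthree]
    constructor <;> ring

/-- For every `i ≥ 0`, the coefficient of `z` in `s^-_i` equals
`Σ_{c ⊨ i+1} (−1)^{|c|+i+1}·(3/2)^{Θ̃(c)}·{c}`. -/
theorem coeff_z_smP (i : ℕ) :
    MvPolynomial.coeff (Finsupp.single true 1) (smP i) =
      ∑ c : Composition (i + 1),
        MvPolynomial.C ((-1 : ℚ) ^ (c.length + i + 1) * (3 / 2 : ℚ) ^ thetaTilde c.blocks) *
          curly c.blocks := by
  rw [smP, (coeff_z_sPair i).1, compositionSum]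
  simp only [compositionTerm, Composition.length, add_assoc]
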